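/- Let r₀, r₁ : PMF (Bool × Bool), with probabilities taken as real numbers. Define the four upper-bound candidates for π₁: u₀¹ := 1 − r₀ {(true, false)}, u₁¹ := 1 − r₁ {(true, false)}, u₀₁¹ := r₀ {p | p.2 = true} + r₁ {(true, true)} + r₁ {(false, false)}, u₁₀¹ := r₁ {p | p.2 = true} + r₀ {(true, true)} + r₀ {(false, false)}; and the four lower-bound candidates for π₀: l₀⁰ := r₀ {(false, true)}, l₁⁰ := r₁ {(false, true)}, l₀₁⁰ := r₀ {p | p.2 = true} − r₁ {(true, true)} − r₁ {(false, false)}, l₁₀⁰ := r₁ {p | p.2 = true} − r₀ {(true, true)} − r₀ {(false, false)}. Then the minimum of the sixteen differences u − l (u ranging over {u₀¹, u₁¹, u₀₁¹, u₁₀¹} and l over {l₀⁰, l₁⁰, l₀₁⁰, l₁₀⁰}) equals the minimum of the eight differences u₀¹ − l₀⁰, u₀¹ − l₁⁰, u₀¹ − l₁₀⁰, u₁¹ − l₀⁰, u₁¹ − l₁⁰, u₁¹ − l₀₁⁰, u₀₁¹ − l₁⁰, u₁₀¹ − l₀⁰. -/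
import Mathlib


/-- The probability (as a real number) that a PMF assigns to a set. -/
noncomputable def pr {α : Type*} (p : PMF α) (s : Set α) : ℝ := (p.toOuterMeasure s).toReal

lemma pr_singleton {α : Type*} (p : PMF α) (a : α) : pr p {a} = (p a).toReal := by
  rw [pr, PMF.toOuterMeasure_apply_singleton]

lemma pr_snd_true (p : PMF (Bool × Bool)) :
    pr p {x | x.2 = true} = (p (true, true)).toReal + (p (false, true)).toReal := by
  rw [pr, PMF.toOuterMeasure_apply, tsum_fintype]
  rw [show (∑ x : Bool × Bool, ({x | x.2 = true} : Set (Bool × Bool)).indicator p x)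
      = p (true, true) + p (false, true) by
    rw [Fintype.sum_prod_type]
    simp [Set.indicator, Fintype.sum_bool]]
  exact ENNReal.toReal_add (p.apply_ne_top _) (p.apply_ne_top _)

lemma pr_total (p : PMF (Bool × Bool)) :
    (p (true, true)).toReal + (p (true, false)).toReal + (p (false, true)).toReal
      + (p (false, false)).toReal = 1 := by
  have h := p.tsum_coe
  rw [tsum_fintype, Fintype.sum_prod_type] at h
  simp only [Fintype.sum_bool] at h
  have := ENNReal.toReal_eq_one_iff
  calc (p (true, true)).toReal + (p (true, false)).toReal + (p (false, true)).toReal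
      + (p (false, false)).toReal
      = ((p (true, true)) + (p (true, false)) + (p (false, true)) + (p (false, false))).toReal := by
        rw [ENNReal.toReal_add, ENNReal.toReal_add, ENNReal.toReal_add] <;>
          first
          | exact p.apply_ne_top _
          | exact ENNReal.add_ne_top.2 ⟨p.apply_ne_top _, p.apply_ne_top _⟩
          | exact ENNReal.add_ne_top.2 ⟨ENNReal.add_ne_top.2 ⟨p.apply_ne_top _, p.apply_ne_top _⟩, p.apply_ne_top _⟩
    _ = 1 := by
        rw [show (p (true, true)) + (p (true, false)) + (p (false, true)) + (p (false, false))
            = p (true, true) + p (true, false) + (p (false, true) + p (false, false)) by ring, h]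
        rfl

/-- Appendix B, upper bounds: for a binary instrument, the minimum of the sixteen
differences (upper bound on `π₁`) − (lower bound on `π₀`) equals the minimum of the
eight non-redundant Balke–Pearl differences. -/
theorem balke_pearl_upper_redundancy
    (r₀ r₁ : PMF (Bool × Bool))
    (u₀ u₁ u₀₁ u₁₀ l₀ l₁ l₀₁ l₁₀ : ℝ)
    (hu₀ : u₀ = 1 - pr r₀ {(true, false)})
    (hu₁ : u₁ = 1 - pr r₁ {(true, false)})
    (hu₀₁ : u₀₁ = pr r₀ {p | p.2 = true} + pr r₁ {(true, true)} + pr r₁ {(false, false)})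
    (hu₁₀ : u₁₀ = pr r₁ {p | p.2 = true} + pr r₀ {(true, true)} + pr r₀ {(false, false)})
    (hl₀ : l₀ = pr r₀ {(false, true)})
    (hl₁ : l₁ = pr r₁ {(false, true)})
    (hl₀₁ : l₀₁ = pr r₀ {p | p.2 = true} - pr r₁ {(true, true)} - pr r₁ {(false, false)})
    (hl₁₀ : l₁₀ = pr r₁ {p | p.2 = true} - pr r₀ {(true, true)} - pr r₀ {(false, false)}) :
    min (u₀ - l₀)
      (min (u₀ - l₁)
      (min (u₀ - l₀₁)
      (min (u₀ - l₁₀)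
      (min (u₁ - l₀)
      (min (u₁ - l₁)
      (min (u₁ - l₀₁)
      (min (u₁ - l₁₀)
      (min (u₀₁ - l₀)
      (min (u₀₁ - l₁)
      (min (u₀₁ - l₀₁)
      (min (u₀₁ - l₁₀)
      (min (u₁₀ - l₀)
      (min (u₁₀ - l₁)
      (min (u₁₀ - l₀₁)
      (u₁₀ - l₁₀)))))))))))))))
    =
    min (u₀ - l₀)
      (min (u₀ - l₁)
      (min (u₀ - l₁₀)
      (min (u₁ - l₀)
      (min (u₁ - l₁)
      (min (u₁ - l₀₁)
      (min (u₀₁ - l₁)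
      (u₁₀ - l₀))))))) := by
  
  simp only [pr_singleton, pr_snd_true] at hu₀ hu₁ hu₀₁ hu₁₀ hl₀ hl₁ hl₀₁ hl₁₀
  have t0 := pr_total r₀
  have t1 := pr_total r₁
  have n1 : (0:ℝ) ≤ (r₀ (true, true)).toReal := ENNReal.toReal_nonneg
  have n2 : (0:ℝ) ≤ (r₀ (true, false)).toReal := ENNReal.toReal_nonneg
  have n3 : (0:ℝ) ≤ (r₀ (false, true)).toReal := ENNReal.toReal_nonneg
  have n4 : (0:ℝ) ≤ (r₀ (false, false)).toReal := ENNReal.toReal_nonneg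
  have n5 : (0:ℝ) ≤ (r₁ (true, true)).toReal := ENNReal.toReal_nonneg
  have n6 : (0:ℝ) ≤ (r₁ (true, false)).toReal := ENNReal.toReal_nonneg
  have n7 : (0:ℝ) ≤ (r₁ (false, true)).toReal := ENNReal.toReal_nonneg
  have n8 : (0:ℝ) ≤ (r₁ (false, false)).toReal := ENNReal.toReal_nonneg
  have h1 : u₁ - l₁ ≤ u₀ - l₀₁ := by linarith
  have h2 : u₀ - l₀ ≤ u₁ - l₁₀ := by linarith
  have h3 : u₁ - l₁ ≤ u₀₁ - l₀ := by linarith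
  have h4 : u₁ - l₁ ≤ u₀₁ - l₀₁ := by linarith
  have h5 : u₀ - l₁ ≤ u₀₁ - l₁₀ := by linarith
  have h6 : u₀ - l₀ ≤ u₁₀ - l₁ := by linarith
  have h7 : u₁ - l₀ ≤ u₁₀ - l₀₁ := by linarith
  have h8 : u₀ - l₀ ≤ u₁₀ - l₁₀ := by linarith
  apply le_antisymm
  · repeat' apply le_min
    all_goals (simp only [min_le_iff, le_refl, true_or, or_true]; try tauto)
  · repeat' apply le_min
    all_goals (simp only [min_le_iff, le_refl, true_or, or_true]; try tauto)
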